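/- arXiv:1004.1279 — 3 statements merged into one kernel-verified Lean document; each statement's English description precedes it below -/
import Mathlib

section
/- Let w = a_1⋯a_n be a word over {a,b} with a_1 = a_n. If deleting some k letters from w yields a palindrome, then one can delete l ≤ k letters from w, none of which are the first or last letter, and obtain a palindrome. -/
/-- A word over {a,b} is modeled as a `List Bool` (`true` = a, `false` = b). -/
def Pal (w : List Bool) : Prop := w.reverse = w

/-- Antipalindrome: `a_i ≠ a_{n-i+1}` for all `i`, i.e. letterwise negation equals reversal. -/
def Antipal (w : List Bool) : Prop := w.map (!·) = w.reverse

/-- Minimal number of deletions turning `w` into a palindrome or antipalindrome. -/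
noncomputable def Sd (w : List Bool) : ℕ :=
  sInf {k | ∃ v : List Bool, v.Sublist w ∧ (Pal v ∨ Antipal v) ∧ w.length = v.length + k}

/-- Maximal `Sd w` over words of length `n`. -/
noncomputable def SdN (n : ℕ) : ℕ :=
  sSup {m | ∃ w : List Bool, w.length = n ∧ Sd w = m}

private lemma tail_sublist_of_sublist_cons {α : Type*} {a : α} {l l' : List α}
    (h : l.Sublist (a :: l')) : l.tail.Sublist l' := by
  rcases List.sublist_cons_iff.1 h with h' | ⟨r, rfl, h'⟩
  · exact (List.tail_sublist l).trans h'
  · simpa using h'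

private lemma dropLast_sublist_of_sublist_concat {α : Type*} {a : α} {l l' : List α}
    (h : l.Sublist (l' ++ [a])) : l.dropLast.Sublist l' := by
  have h1 : l.reverse.Sublist (a :: l'.reverse) := by simpa using h.reverse
  have h2 := tail_sublist_of_sublist_cons h1
  have h3 : l.reverse.tail.reverse.Sublist l' := by simpa using h2.reverse
  rwa [List.tail_reverse, List.reverse_reverse] at h3

private lemma pal_interior {v : List Bool} (hv : Pal v) : Pal v.tail.dropLast := by
  unfold Pal at *
  have h1 : v.tail.reverse = v.dropLast := by
    have := List.tail_reverse (l := v.reverse)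
    rw [List.reverse_reverse, hv] at this
    rw [this, List.reverse_reverse]
  rw [← List.tail_reverse, h1, List.tail_dropLast]

theorem palindrome_subseq_keep_ends (x : Bool) (s w : List Bool) (k : ℕ)
    (hw : w = x :: (s ++ [x]))
    (h : ∃ v : List Bool, v.Sublist w ∧ Pal v ∧ w.length = v.length + k) :
    ∃ (m : List Bool) (l : ℕ), l ≤ k ∧ m.Sublist s ∧ Pal (x :: (m ++ [x])) ∧
      w.length = (x :: (m ++ [x])).length + l := by
  obtain ⟨v, hvs, hvp, hvl⟩ := h
  subst hw
  set m := v.tail.dropLast with hm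
  have hms : m.Sublist s :=
    dropLast_sublist_of_sublist_concat (tail_sublist_of_sublist_cons hvs)
  have hmp : Pal m := pal_interior hvp
  have hlen : v.length ≤ m.length + 2 := by
    have h1 : v.tail.length = v.length - 1 := by simp
    have h2 : m.length = v.tail.length - 1 := by simp [hm]
    omega
  have hms' : m.length ≤ s.length := hms.length_le
  refine ⟨m, s.length - m.length, by simp at hvl; omega, hms, ?_, by simp; omega⟩
  simp [Pal] at hmp ⊢
  simp [hmp]
end

section
/- Let w = a_1⋯a_n be a word over {a,b} with a_1 ≠ a_n. If deleting some k letters from w yields an antipalindrome, then one can delete l ≤ k letters from w, none of which are the first or last letter, and obtain an antipalindrome. -/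
lemma antipal_cons (c : Bool) (u : List Bool) (hu : Antipal u) :
    Antipal (c :: (u ++ [!c])) := by
  simp [Antipal] at hu ⊢
  simp [hu]

lemma antipal_decomp (v : List Bool) (hv : Antipal v) (hne : v ≠ []) :
    ∃ c u, v = c :: (u ++ [!c]) ∧ Antipal u := by
  obtain ⟨c, t, rfl⟩ := List.exists_cons_of_ne_nil hne
  rcases t.eq_nil_or_concat with rfl | ⟨u, d, rfl⟩
  · simp [Antipal] at hv
  · simp only [Antipal, List.concat_eq_append, List.map_cons, List.map_append, List.map_cons,
      List.map_nil, List.reverse_cons, List.reverse_append, List.reverse_cons, List.reverse_nil,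
      List.nil_append, List.cons_append] at hv
    obtain ⟨hd, htail⟩ := List.cons.injEq _ _ _ _ ▸ hv
    have hd' : d = !c := hd.symm
    subst hd'
    refine ⟨c, u, by simp, ?_⟩
    have : List.map (fun x => !x) u = u.reverse := by
      have := List.append_inj_left' htail rfl
      simpa using this
    simpa [Antipal] using this

lemma sublist_of_cons_ne {a b : Bool} {l1 l2 : List Bool} (h : (a :: l1).Sublist (b :: l2))
    (hne : a ≠ b) : (a :: l1).Sublist l2 := by
  cases h with
  | cons _ h => exact h
  | cons_cons => exact absurd rfl hne

theorem antipalindrome_subseq_keep_ends (x : Bool) (s w : List Bool) (k : ℕ)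
    (hw : w = x :: (s ++ [!x]))
    (h : ∃ v : List Bool, v.Sublist w ∧ Antipal v ∧ w.length = v.length + k) :
    ∃ (m : List Bool) (l : ℕ), l ≤ k ∧ m.Sublist s ∧ Antipal (x :: (m ++ [!x])) ∧
      w.length = (x :: (m ++ [!x])).length + l := by
  subst hw
  obtain ⟨v, hsub, hanti, hlen⟩ := h
  rcases eq_or_ne v [] with rfl | hne
  · refine ⟨[], s.length, ?_, List.nil_sublist s, antipal_cons x [] (by simp [Antipal]), ?_⟩
    · simp at hlen; omega
    · simp; omega
  · obtain ⟨c, u, rfl, hu⟩ := antipal_decomp v hanti hne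
    by_cases hcx : c = x
    · subst hcx
      have h1 : (u ++ [!c]).Sublist (s ++ [!c]) := (List.cons_sublist_cons).mp hsub
      have h2 : u.Sublist s := by
        have := h1.reverse
        simp only [List.reverse_append, List.reverse_cons, List.reverse_nil, List.nil_append,
          List.cons_append, List.singleton_append] at this
        exact (List.reverse_sublist.mp ((List.cons_sublist_cons).mp this))
      refine ⟨u, k, le_refl k, h2, antipal_cons c u hu, ?_⟩
      simpa using hlen
    · have hc : c = !x := by cases c <;> cases x <;> simp_all
      subst hc
      have h1 : ((!x) :: (u ++ [x])).Sublist (s ++ [!x]) := by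
        have := sublist_of_cons_ne hsub (by simp)
        simpa using this
      have h2 : ((!x) :: (u ++ [x])).Sublist s := by
        have := h1.reverse
        simp only [List.reverse_append, List.reverse_cons, List.reverse_nil, List.nil_append,
          List.cons_append, List.singleton_append] at this
        have := sublist_of_cons_ne this (by simp)
        have := this.reverse
        simpa using this
      refine ⟨u, k, le_refl k, ?_, antipal_cons x u hu, ?_⟩
      · exact ((u.sublist_append_left [x]).trans (List.sublist_cons_self _ _)).trans h2
      · simpa using hlen
end

section
/- For every n ∈ ℕ and every pair (α,β) ∈ {(0,0),(1,0),(1,1),(2,1),(3,1),(3,2),(4,2)}, the word w_{n,α,β} = b^{n+1}(ab)^n b^{2n+1+α} a^{2n+1+β} satisfies S_d(w_{n,α,β}) ≥ 3n+1+⌊(α+β)/3⌋. -/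
/-- The word $w_{n,α,β} = b^{n+1}(ab)^n b^{2n+1+α} a^{2n+1+β}$ (a = true, b = false). -/
def W (n α β : ℕ) : List Bool :=
  List.replicate (n+1) false ++ (List.replicate n [true, false]).flatten ++
    List.replicate (2*n+1+α) false ++ List.replicate (2*n+1+β) true

namespace SdWAux
open List

/-- The auxiliary word family `b^p (ab)^m b^r`. -/
def E (p m r : ℕ) : List Bool :=
  List.replicate p false ++ (List.replicate m [true, false]).flatten ++ List.replicate r false

lemma E_succ_p (p m r : ℕ) : E (p+1) m r = false :: E p m r := by
  simp [E, List.replicate_succ]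

lemma E_zero_succ (m r : ℕ) : E 0 (m+1) r = true :: false :: E 0 m r := by
  simp [E, List.replicate_succ]

lemma E_zero_zero (r : ℕ) : E 0 0 r = List.replicate r false := by
  simp [E]

lemma join_length (m : ℕ) : ((List.replicate m [true, false]).flatten).length = 2*m := by
  induction m with
  | zero => simp
  | succ m ih => rw [List.replicate_succ]; simp [ih]; omega

lemma join_count_true (m : ℕ) : ((List.replicate m [true, false]).flatten).count true = m := by
  induction m with
  | zero => simp
  | succ m ih => rw [List.replicate_succ]; simp [List.count_append, ih]

lemma join_count_false (m : ℕ) : ((List.replicate m [true, false]).flatten).count false = m := by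
  induction m with
  | zero => simp
  | succ m ih => rw [List.replicate_succ]; simp [List.count_append, ih]

lemma length_E (p m r : ℕ) : (E p m r).length = p + 2*m + r := by
  simp [E, join_length]; omega

lemma count_true_E (p m r : ℕ) : (E p m r).count true = m := by
  simp [E, List.count_append, join_count_true, List.count_replicate]

lemma count_false_E (p m r : ℕ) : (E p m r).count false = p + m + r := by
  simp [E, List.count_append, join_count_false, List.count_replicate]; omega

lemma cons_sublist_of_ne {x y : Bool} {u w : List Bool}
    (h : (x :: u) <+ (y :: w)) (hxy : x ≠ y) : (x :: u) <+ w := by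
  cases h with
  | cons _ h => exact h
  | cons_cons _ h => exact absurd rfl hxy

lemma getLast?_replicate_succ (k : ℕ) (c : Bool) :
    (List.replicate (k+1) c).getLast? = some c := by
  rw [List.replicate_succ', List.getLast?_concat]

/-- If `u` is a sublist of `X ++ c^s` but ends with `!c`, then `u <+ X`. -/
lemma trick {u X : List Bool} {s : ℕ} {c : Bool}
    (h : u <+ X ++ List.replicate s c) (hl : u.getLast? = some (!c)) : u <+ X := by
  rcases List.sublist_append_iff.mp h with ⟨u1, u2, rfl, h1, h2⟩
  rcases List.sublist_replicate_iff.mp h2 with ⟨k, hk, rfl⟩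
  cases k with
  | zero => simpa using h1
  | succ k =>
    rw [List.getLast?_append, getLast?_replicate_succ] at hl
    simp at hl

/-- Key decomposition: if `b^q a rest <+ b^p (ab)^m b^r` then the `a` is the `i`-th
`a` of the middle block for some `i`, with `q + 1 ≤ p + i`, and `rest` fits after it. -/
lemma keyA : ∀ N m p q r rest, 2*m + p + q ≤ N →
    (List.replicate q false ++ true :: rest) <+ E p m r →
    ∃ i, 1 ≤ i ∧ i ≤ m ∧ q + 1 ≤ p + i ∧ rest <+ false :: E 0 (m - i) r := by
  intro N
  induction N with
  | zero =>
    intro m p q r rest hN h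
    obtain ⟨rfl, rfl, rfl⟩ : m = 0 ∧ p = 0 ∧ q = 0 := by omega
    rw [E_zero_zero] at h
    simp at h
    have := h.count_le true
    simp [List.count_replicate] at this
  | succ N ih =>
    intro m p q r rest hN h
    match p, q with
    | p+1, 0 =>
      rw [E_succ_p] at h
      simp only [List.replicate, List.nil_append] at h
      have h' := cons_sublist_of_ne h (by simp)
      obtain ⟨i, h1, h2, h3, h4⟩ := ih m p 0 r rest (by omega) (by simpa using h')
      exact ⟨i, h1, h2, by omega, h4⟩
    | p+1, q+1 =>
      rw [E_succ_p, List.replicate_succ, List.cons_append] at h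
      cases h with
      | cons _ h' =>
        obtain ⟨i, h1, h2, h3, h4⟩ := ih m p (q+1) r rest (by omega)
          (by rw [List.replicate_succ, List.cons_append]; exact h')
        exact ⟨i, h1, h2, by omega, h4⟩
      | cons_cons _ h' =>
        obtain ⟨i, h1, h2, h3, h4⟩ := ih m p q r rest (by omega) h'
        exact ⟨i, h1, h2, by omega, h4⟩
    | 0, q =>
      match m with
      | 0 =>
        rw [E_zero_zero] at h
        have := h.count_le true
        simp [List.count_replicate, List.count_append] at this
      | m+1 =>
        rw [E_zero_succ] at h
        match q with
        | 0 =>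
          simp only [List.replicate, List.nil_append] at h
          cases h with
          | cons_cons _ h' =>
            refine ⟨1, le_refl _, by omega, by omega, ?_⟩
            simpa using h'
          | cons _ h' =>
            have h'' := cons_sublist_of_ne h' (by simp)
            obtain ⟨i, h1, h2, h3, h4⟩ := ih m 0 0 r rest (by omega) (by simpa using h'')
            refine ⟨i+1, by omega, by omega, by omega, ?_⟩
            rwa [Nat.succ_sub_succ]
        | q+1 =>
          rw [List.replicate_succ, List.cons_append] at h
          have h' := cons_sublist_of_ne h (by simp)
          cases h' with
          | cons _ h'' =>
            obtain ⟨i, h1, h2, h3, h4⟩ := ih m 0 (q+1) r rest (by omega)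
              (by rw [List.replicate_succ, List.cons_append]; exact h'')
            refine ⟨i+1, by omega, by omega, by omega, ?_⟩
            rwa [Nat.succ_sub_succ]
          | cons_cons _ h'' =>
            obtain ⟨i, h1, h2, h3, h4⟩ := ih m 0 q r rest (by omega) h''
            refine ⟨i+1, by omega, by omega, by omega, ?_⟩
            rwa [Nat.succ_sub_succ]

/-- Iterated version: if `a^{g+1} rest <+ b^p (ab)^m b^r` then `rest` fits after the
`i`-th `a` for some `i ≥ g+1`. -/
lemma keyK : ∀ g rest p m r, (List.replicate (g+1) true ++ rest) <+ E p m r →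
    ∃ i, g + 1 ≤ i ∧ i ≤ m ∧ rest <+ false :: E 0 (m - i) r := by
  intro g
  induction g with
  | zero =>
    intro rest p m r h
    obtain ⟨i, h1, h2, h3, h4⟩ := keyA (2*m+p) m p 0 r rest (by omega) (by simpa using h)
    exact ⟨i, h1, h2, h4⟩
  | succ g ihg =>
    intro rest p m r h
    rw [List.replicate_succ, List.cons_append] at h
    obtain ⟨i1, hi1, hi1m, _, h4⟩ := keyA (2*m+p) m p 0 r _ (by omega) (by simpa using h)
    rw [List.replicate_succ, List.cons_append] at h4
    have h5 := cons_sublist_of_ne h4 (by simp)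
    have h5' : (List.replicate (g+1) true ++ rest) <+ E 0 (m - i1) r := by
      rw [List.replicate_succ, List.cons_append]; exact h5
    obtain ⟨i2, hg2, hi2, h6⟩ := ihg rest 0 (m - i1) r h5'
    refine ⟨i1 + i2, by omega, by omega, ?_⟩
    have he : m - (i1 + i2) = m - i1 - i2 := by omega
    rw [he]; exact h6

lemma head?_of_ne_nil_dropWhile {v : List Bool} {c : Bool}
    (h : v.dropWhile (· == c) ≠ []) : (v.dropWhile (· == c)).head? = some (!c) := by
  have hd := List.head?_dropWhile_not (· == c) v
  cases hh : (v.dropWhile (· == c)).head? with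
  | none => exact absurd (List.head?_eq_none_iff.mp hh) h
  | some x =>
    rw [hh] at hd
    simp only at hd
    cases x <;> cases c <;> simp_all

lemma takeWhile_replicate' (v : List Bool) (c : Bool) :
    v.takeWhile (· == c) = List.replicate (v.takeWhile (· == c)).length c := by
  apply List.eq_replicate_of_mem
  intro b hb
  have := List.mem_takeWhile_imp hb
  simpa using this

/-- Peeling equal runs off both ends of a palindrome. -/
lemma pal_peel {v : List Bool} {c : Bool} (hp : Pal v)
    (h : (v.takeWhile (· == c)).length < v.length) :
    ∃ core : List Bool, v = List.replicate (v.takeWhile (· == c)).length c ++ core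
        ++ List.replicate (v.takeWhile (· == c)).length c ∧ core ≠ [] ∧
      core.head? = some (!c) ∧ core.getLast? = some (!c) := by
  set q := (v.takeWhile (· == c)).length with hq
  set t := v.dropWhile (· == c) with ht
  have hv1 : v = List.replicate q c ++ t := by
    conv_lhs => rw [← List.takeWhile_append_dropWhile (p := (· == c)) (l := v)]
    rw [← takeWhile_replicate' v c, ← ht]
  have hlen : v.length = q + t.length := by
    rw [hv1]; simp
  have htne : t ≠ [] := by
    intro h0
    rw [h0] at hlen
    simp at hlen
    omega
  have hth : t.head? = some (!c) := head?_of_ne_nil_dropWhile htne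
  have hv2 : v = t.reverse ++ List.replicate q c := by
    conv_lhs => rw [← hp]
    conv_lhs => rw [hv1]
    rw [List.reverse_append, List.reverse_replicate]
  have hqt : q ≤ t.length := by
    by_contra hgt
    push_neg at hgt
    have hdrop : t = v.drop q := by
      rw [hv1, List.drop_left' (by simp)]
    have h1 : v.drop q = List.replicate t.length c := by
      conv_lhs => rw [hv2]
      have hsplit : q = t.reverse.length + (q - t.length) := by simp; omega
      rw [hsplit, List.drop_length_add_append, List.drop_replicate]
      congr 1
      omega
    have htrep : t = List.replicate t.length c := by rw [hdrop, h1]; simp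
    have hcontra := hth
    rw [htrep] at hcontra
    rcases hl : t.length with _ | k
    · rw [hl] at hcontra; simp at hcontra
    · rw [hl, List.replicate_succ] at hcontra; simp at hcontra
  have hcore : t = t.reverse.drop q ++ List.replicate q c := by
    have heq := congrArg (List.drop q) (hv1.symm.trans hv2)
    rw [List.drop_left' (by simp)] at heq
    rw [List.drop_append_of_le_length (by simpa using hqt)] at heq
    exact heq
  generalize hu : t.reverse.drop q = u at hcore
  have hne : u ≠ [] := by
    intro h0
    rw [h0, List.nil_append] at hcore
    have hcontra := hth
    rw [hcore] at hcontra
    rcases hl : q with _ | k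
    · rw [hl] at hcontra; simp at hcontra
    · rw [hl, List.replicate_succ] at hcontra; simp at hcontra
  have hhd : u.head? = some (!c) := by
    have hcontra := hth
    rw [hcore, List.head?_append] at hcontra
    cases hc : u.head? with
    | none => exact absurd (List.head?_eq_none_iff.mp hc) hne
    | some x => rw [hc] at hcontra; simpa using hcontra
  have h2 : v = List.replicate q c ++ (u ++ List.replicate q c) := by
    rw [hv1, hcore]
  have h1 : v.reverse = List.replicate q c ++ (u.reverse ++ List.replicate q c) := by
    rw [h2]
    simp [List.reverse_append, List.reverse_replicate, List.append_assoc]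
  have hcc : u.reverse = u := by
    rw [hp, h2] at h1
    have h3 := List.append_cancel_left h1.symm
    exact List.append_cancel_right h3
  have hgl : u.getLast? = some (!c) := by
    rw [← List.head?_reverse, hcc]
    exact hhd
  exact ⟨u, by rw [h2, List.append_assoc], hne, hhd, hgl⟩

lemma W_eq (n α β : ℕ) :
    W n α β = E (n+1) n (2*n+1+α) ++ List.replicate (2*n+1+β) true := by
  simp [W, E, List.append_assoc]

lemma length_W (n α β : ℕ) : (W n α β).length = 7*n+3+α+β := by
  rw [W_eq]; simp [length_E]; omega

lemma count_true_W (n α β : ℕ) : (W n α β).count true = 3*n+1+β := by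
  rw [W_eq]; simp [List.count_append, count_true_E, List.count_replicate]; omega

lemma count_false_W (n α β : ℕ) : (W n α β).count false = 4*n+2+α := by
  rw [W_eq]; simp [List.count_append, count_false_E, List.count_replicate]; omega

lemma all_of_takeWhile_len {v : List Bool} {c : Bool}
    (h : (v.takeWhile (· == c)).length = v.length) : v = List.replicate v.length c := by
  have hpre := (List.takeWhile_prefix (l := v) (· == c)).eq_of_length h
  rw [← hpre]
  exact takeWhile_replicate' v c

lemma count_repl_self (k : ℕ) (c : Bool) : (List.replicate k c).count c = k := by
  simp [List.count_replicate]

/-- Any palindromic sublist of `W n α β` has length at most `4n+2+α`. -/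
lemma palBound (n α β : ℕ) (hβ : β ≤ n + 1 + α) (v : List Bool)
    (hs : v.Sublist (W n α β)) (hp : Pal v) : v.length ≤ 4*n+2+α := by
  rcases eq_or_ne v [] with rfl | hv0
  · simp
  rw [W_eq] at hs
  by_cases hga : (v.takeWhile (· == true)).length = v.length
  · -- v is all a's
    have hrep := all_of_takeWhile_len hga
    have hcnt : v.count true = v.length := by
      conv_lhs => rw [hrep]
      exact count_repl_self _ _
    have hle := hs.count_le true
    rw [← W_eq, count_true_W] at hle
    omega
  have hglt : (v.takeWhile (· == true)).length < v.length :=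
    lt_of_le_of_ne (List.takeWhile_prefix _).length_le hga
  rcases Nat.eq_zero_or_pos (v.takeWhile (· == true)).length with hg0 | hgpos
  · -- v starts (and hence ends) with b
    have hhd : v.head? = some false := by
      obtain ⟨x, v', rfl⟩ := List.exists_cons_of_ne_nil hv0
      rcases x with _ | _
      · rfl
      · rw [List.takeWhile_cons] at hg0; simp at hg0
    have hgl : v.getLast? = some false := by
      rw [← List.head?_reverse, hp]; exact hhd
    have hsC : v.Sublist (E (n+1) n (2*n+1+α)) := trick (c := true) hs (by simpa using hgl)
    by_cases hqa : (v.takeWhile (· == false)).length = v.length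
    · -- all b's
      have hrep := all_of_takeWhile_len hqa
      have hcnt : v.count false = v.length := by
        conv_lhs => rw [hrep]
        exact count_repl_self _ _
      have hle := hsC.count_le false
      rw [count_false_E] at hle
      omega
    · have hqlt : (v.takeWhile (· == false)).length < v.length :=
        lt_of_le_of_ne (List.takeWhile_prefix _).length_le hqa
      obtain ⟨core, hdec, hcne, hch, hcl⟩ := pal_peel (c := false) hp hqlt
      set q0 := (v.takeWhile (· == false)).length with hq0
      obtain ⟨x, core', rfl⟩ := List.exists_cons_of_ne_nil hcne
      have hx : x = true := by simpa using hch
      subst hx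
      have hsC2 : (List.replicate q0 false ++ true :: (core' ++ List.replicate q0 false)).Sublist
          (E (n+1) n (2*n+1+α)) := by
        rw [← List.cons_append, ← List.append_assoc, ← hdec]
        exact hsC
      obtain ⟨i, hi1, hin, hqi, hrest⟩ :=
        keyA (2*n+(n+1)+q0) n (n+1) q0 (2*n+1+α) _ (le_refl _) hsC2
      have hvlen : v.length = q0 + (1 + core'.length) + q0 := by
        rw [hdec]; simp; omega
      rcases eq_or_ne core' [] with rfl | hcne'
      · simp at hvlen; omega
      · have hcl' : core'.getLast? = some true := by
          have : (true :: core').getLast? = core'.getLast? := by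
            rw [← List.singleton_append, List.getLast?_append]
            obtain ⟨y, hy⟩ := Option.ne_none_iff_exists'.mp
              (fun hnone => hcne' (List.getLast?_eq_none_iff.mp hnone))
            rw [hy]; rfl
          rw [← this]; simpa using hcl
        have hsub' : core'.Sublist (false :: E 0 (n - i) (2*n+1+α)) :=
          (List.sublist_append_left core' (List.replicate q0 false)).trans hrest
        have hsplit : false :: E 0 (n - i) (2*n+1+α) =
            (false :: (List.replicate (n-i) [true, false]).flatten) ++
              List.replicate (2*n+1+α) false := by
          simp [E]
        rw [hsplit] at hsub'
        have hsub'' := trick (c := false) hsub' (by simpa using hcl')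
        have hlen' := hsub''.length_le
        rw [List.length_cons, join_length] at hlen'
        omega
  · -- v starts (and ends) with a
    obtain ⟨core, hdec, hcne, hch, hcl⟩ := pal_peel (c := true) hp hglt
    set g := (v.takeWhile (· == true)).length with hg
    have hu : (List.replicate g true ++ core).Sublist v := by
      rw [hdec]
      exact List.sublist_append_left _ _
    have hu2 := hu.trans hs
    have hul : (List.replicate g true ++ core).getLast? = some false := by
      rw [List.getLast?_append]
      obtain ⟨y, hy⟩ := Option.ne_none_iff_exists'.mp
        (fun hnone => hcne (List.getLast?_eq_none_iff.mp hnone))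
      have hyv : y = false := by rw [hy] at hcl; simpa using hcl
      rw [hy, hyv]; rfl
    have huC : (List.replicate g true ++ core).Sublist (E (n+1) n (2*n+1+α)) :=
      trick (c := true) hu2 (by simpa using hul)
    obtain ⟨g', hg'⟩ := Nat.exists_eq_succ_of_ne_zero (Nat.pos_iff_ne_zero.mp hgpos)
    rw [hg'] at huC
    obtain ⟨i, hgi, hin, hsubc⟩ := keyK g' core (n+1) n (2*n+1+α) huC
    have hlc := hsubc.length_le
    rw [List.length_cons, length_E] at hlc
    have hvlen : v.length = g + core.length + g := by rw [hdec]; simp; omega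
    omega

lemma count_not_true (v : List Bool) : (v.map (!·)).count true = v.count false := by
  induction v with
  | nil => simp
  | cons x t ih => cases x <;> simp [List.count_cons, ih]

lemma count_tf (v : List Bool) : v.count true + v.count false = v.length := by
  induction v with
  | nil => simp
  | cons x t ih => cases x <;> simp [List.count_cons] <;> omega

lemma antipal_len {v : List Bool} (ha : Antipal v) : v.length = 2 * v.count true := by
  have h1 : (v.map (!·)).count true = v.reverse.count true := by rw [ha]
  rw [count_not_true, List.count_reverse] at h1
  have h2 := count_tf v
  omega

/-- Any antipalindromic sublist of `W n α β` has length at most `4n+2+2β`. -/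
lemma antipalBound (n α β : ℕ) (v : List Bool)
    (hs : v.Sublist (W n α β)) (ha : Antipal v) : v.length ≤ 4*n+2+2*β := by
  have hlen2 := antipal_len ha
  suffices h : v.count true ≤ 2*n+1+β by omega
  rw [W_eq] at hs
  obtain ⟨v1, v2, rfl, h1, h2⟩ := List.sublist_append_iff.mp hs
  obtain ⟨f, hf, rfl⟩ := List.sublist_replicate_iff.mp h2
  have hcc : (v1 ++ List.replicate f true).count true = v1.count true + f := by
    simp [List.count_append, List.count_replicate]
  have hstar : v1.map (!·) ++ List.replicate f false =
      List.replicate f true ++ v1.reverse := by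
    have hA := ha
    unfold Antipal at hA
    rw [List.map_append, List.map_replicate, List.reverse_append,
      List.reverse_replicate] at hA
    simpa using hA
  rcases le_or_gt f v1.length with hfle | hflt
  · -- main case : v1 starts with f b's
    have htake : v1.take f = List.replicate f false := by
      have h3 : (v1.map (!·)).take f = List.replicate f true := by
        have h4 := congrArg (List.take f) hstar
        rw [List.take_append_of_le_length (by simpa using hfle),
          List.take_left' (by simp)] at h4
        exact h4
      have h5 : (v1.take f).map (!·) = List.replicate f true := by
        rw [List.map_take, h3]
      have hinj : Function.Injective (fun x : Bool => !x) := fun a b hab => by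
        cases a <;> cases b <;> simp_all
      exact List.map_injective_iff.mpr hinj (h5.trans (by simp))
    rcases Nat.eq_zero_or_pos (v1.count true) with hm0 | hm
    · omega
    · have hv1split : v1 = List.replicate f false ++ v1.drop f := by
        rw [← htake, List.take_append_drop]
      have hcw : (v1.drop f).count true = v1.count true := by
        conv_rhs => rw [hv1split]
        simp [List.count_append, List.count_replicate]
      have hdne : (v1.drop f).dropWhile (· == false) ≠ [] := by
        intro h0
        have hall := List.dropWhile_eq_nil_iff.mp h0
        have : v1.drop f = List.replicate (v1.drop f).length false :=
          List.eq_replicate_of_mem (fun b hb => by simpa using hall b hb)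
        rw [this] at hcw
        simp [List.count_replicate] at hcw
        omega
      have hdh : ((v1.drop f).dropWhile (· == false)).head? = some true := by
        have := head?_of_ne_nil_dropWhile (c := false) hdne
        simpa using this
      obtain ⟨x, rest, hdx⟩ := List.exists_cons_of_ne_nil hdne
      have hx : x = true := by rw [hdx] at hdh; simpa using hdh
      subst hx
      have hwsplit : v1.drop f =
          List.replicate ((v1.drop f).takeWhile (· == false)).length false ++
            true :: rest := by
        conv_lhs => rw [← List.takeWhile_append_dropWhile (p := (· == false)) (l := v1.drop f)]
        rw [takeWhile_replicate', hdx]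
        simp
      set e := ((v1.drop f).takeWhile (· == false)).length with he
      have hv1' : v1 = List.replicate (f+e) false ++ true :: rest := by
        rw [List.replicate_add, List.append_assoc, ← hwsplit]
        exact hv1split
      rw [hv1'] at h1
      obtain ⟨i, hi1, hin, hqi, hrest⟩ :=
        keyA (2*n+(n+1)+(f+e)) n (n+1) (f+e) (2*n+1+α) rest (le_refl _) h1
      have hcr : rest.count true ≤ n - i := by
        have h7 := hrest.count_le true
        simpa [List.count_cons, count_true_E] using h7
      have hm' : v1.count true ≤ n - i + 1 := by
        rw [← hcw, hwsplit]
        simp [List.count_append, List.count_cons, List.count_replicate]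
        omega
      omega
  · -- f > |v1| : the whole count is < f
    have hl : (v1 ++ List.replicate f true).length = v1.length + f := by simp
    omega

end SdWAux



theorem sd_W_lower (n α β : ℕ)
    (h : (α, β) ∈ ({(0,0),(1,0),(1,1),(2,1),(3,1),(3,2),(4,2)} : Set (ℕ × ℕ))) :
    3*n + 1 + (α + β) / 3 ≤ Sd (W n α β) := by
  have hne : {k | ∃ v : List Bool, v.Sublist (W n α β) ∧ (Pal v ∨ Antipal v) ∧
      (W n α β).length = v.length + k}.Nonempty :=
    ⟨(W n α β).length, [], List.nil_sublist _, Or.inl rfl, by simp⟩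
  refine le_csInf hne ?_
  rintro k ⟨v, hsub, hpa, hlen⟩
  have hlw : (W n α β).length = 7*n+3+α+β := SdWAux.length_W n α β
  simp only [Set.mem_insert_iff, Set.mem_singleton_iff, Prod.mk.injEq] at h
  rcases h with ⟨rfl,rfl⟩|⟨rfl,rfl⟩|⟨rfl,rfl⟩|⟨rfl,rfl⟩|⟨rfl,rfl⟩|⟨rfl,rfl⟩|⟨rfl,rfl⟩ <;>
  · rcases hpa with hp | ha
    · have hb := SdWAux.palBound n _ _ (by omega) v hsub hp
      omega
    · have hb := SdWAux.antipalBound n _ _ v hsub ha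
      omega
end
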